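/- arXiv:1410.3671 — 2 statements merged into one kernel-verified Lean document; each statement's English description precedes it below -/
import Mathlib

section
/- Every nonzero projective module over a finite-dimensional algebra has a maximal (proper) submodule. -/
/-!
The Jacobson radical `J` of the Artinian ring `A` is nilpotent. For a projective module `P`, the
radical of `P` (the intersection of its maximal submodules) lies in `J • P`: writing `P` as a
retract of a free module, every coordinate of an element of the radical lies in the radical of `A`.
If `P` had no maximal submodule, its radical would be all of `P`, so `P = J • P = Jⁿ • P = 0`.
-/

namespace Submodule

variable {R M : Type*} [Ring R] [AddCommGroup M] [Module R M]

theorem le_pow_smul_of_le_smul {I : Ideal R} {N : Submodule R M} (h : N ≤ I • N) (k : ℕ) :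
    N ≤ (I ^ k) • N := by
  induction k with
  | zero => rw [Submodule.pow_zero, Submodule.one_smul]
  | succ k ih => rw [Submodule.pow_succ, Submodule.mul_smul]; exact ih.trans (smul_mono_right _ h)

theorem eq_bot_of_le_smul_of_isNilpotent {I : Ideal R} (hI : IsNilpotent I) {N : Submodule R M}
    (h : N ≤ I • N) : N = ⊥ := by
  obtain ⟨n, hn⟩ := hI
  simpa [hn] using le_pow_smul_of_le_smul h n

end Submodule

theorem Module.Projective.jacobson_le_jacobson_smul_top (R P : Type*) [Ring R] [AddCommGroup P]
    [Module R P] [Module.Projective R P] :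
    Module.jacobson R P ≤ Ring.jacobson R • (⊤ : Submodule R P) := by
  obtain ⟨s, hs⟩ := Module.Projective.out (R := R) (P := P)
  intro p hp
  have hcoord (i : P) : s p i ∈ Ring.jacobson R :=
    Module.map_jacobson_le (Finsupp.lapply i ∘ₗ s) ⟨p, hp, rfl⟩
  rw [← hs p, Finsupp.linearCombination_apply]
  exact Submodule.sum_mem _ fun i _ ↦ Submodule.smul_mem_smul (hcoord i) Submodule.mem_top

/-- Every nonzero projective module over a finite-dimensional algebra has a
maximal submodule. -/
theorem stmt9 {K A P : Type*} [Field K] [Ring A] [Algebra K A] [FiniteDimensional K A]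
    [AddCommGroup P] [Module A P] [Module.Projective A P] [Nontrivial P] :
    ∃ m : Submodule A P, IsCoatom m := by
  have : IsArtinianRing A := IsArtinianRing.of_finite K A
  by_contra! h
  have hjac : Module.jacobson A P = ⊤ := sInf_eq_top.mpr fun m hm ↦ (h m hm).elim
  have htop_eq_bot := Submodule.eq_bot_of_le_smul_of_isNilpotent IsSemiprimaryRing.isNilpotent
    (hjac ▸ Module.Projective.jacobson_le_jacobson_smul_top A P)
  exact top_ne_bot htop_eq_bot
end

section
/- Every projective indecomposable module over a finite-dimensional algebra is cyclic (hence finitely generated). -/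
/-!
Let `J` be the Jacobson radical of `A`; it is nilpotent and `A ⧸ J` is semisimple, so
`P ⧸ J P` is a semisimple module, nonzero by Nakayama's lemma. Since `P` is projective, every
endomorphism of `P ⧸ J P` lifts to `P`, and the kernel of this reduction consists of nilpotent
endomorphisms; hence idempotents lift. As `P` is indecomposable its only idempotent endomorphisms
are `0` and `1`, so the same holds for `P ⧸ J P`, which is therefore simple, hence cyclic.
Any lift to `P` of a generator of `P ⧸ J P` generates `P`, again by Nakayama's lemma.
-/

/-- A module is indecomposable if it is nonzero and has no nontrivial direct summand. -/
def IsIndecomposable (A M : Type*) [Ring A] [AddCommGroup M] [Module A M] : Prop :=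
  Nontrivial M ∧ ∀ N N' : Submodule A M, IsCompl N N' → N = ⊥ ∨ N' = ⊥

namespace Submodule

variable {R M : Type*} [Ring R] [AddCommGroup M] [Module R M] {I : Ideal R}

theorem eq_top_of_sup_smul_top_eq_top (hI : IsNilpotent I) {N : Submodule R M}
    (h : N ⊔ I • ⊤ = ⊤) : N = ⊤ := by
  obtain ⟨n, hn⟩ := hI
  have key : ∀ k, N ⊔ I ^ k • (⊤ : Submodule R M) = ⊤ := by
    intro k
    induction k with
    | zero => rw [I.pow_zero, Ideal.one_eq_top, top_smul, sup_top_eq]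
    | succ k ih =>
      refine eq_top_iff.mpr ?_
      calc ⊤ = N ⊔ I ^ k • (N ⊔ I • ⊤) := by rw [h, ih]
        _ = N ⊔ I ^ k • N ⊔ I ^ (k + 1) • ⊤ := by
          rw [smul_sup, ← Submodule.mul_smul, ← I.pow_succ, sup_assoc]
        _ ≤ N ⊔ I ^ (k + 1) • ⊤ := by
          gcongr
          exact sup_le le_rfl smul_le_right
  simpa [hn] using key n

theorem smul_top_ne_top [Nontrivial M] (hI : IsNilpotent I) : I • (⊤ : Submodule R M) ≠ ⊤ :=
  fun h ↦ bot_ne_top (eq_top_of_sup_smul_top_eq_top hI (N := ⊥) (by simpa using h))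

end Submodule

instance IsSemiprimaryRing.isSemisimpleModule_quotient_jacobson_smul_top {R M : Type*} [Ring R]
    [IsSemiprimaryRing R] [AddCommGroup M] [Module R M] :
    IsSemisimpleModule R (M ⧸ Ring.jacobson R • (⊤ : Submodule R M)) :=
  (Module.isTorsionBySet_quotient_ideal_smul M _).isSemisimpleModule_iff.mp inferInstance

namespace Module.End

variable {R M : Type*} [Ring R] [AddCommGroup M] [Module R M] (I : Ideal R)

def reduce : Module.End R M →+* Module.End R (M ⧸ I • (⊤ : Submodule R M)) where
  toFun f := Submodule.mapQ _ _ f (Submodule.smul_top_le_comap_smul_top I f)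
  map_one' := Submodule.mapQ_id _
  map_mul' f g := by ext; rfl
  map_zero' := by ext; rfl
  map_add' f g := by ext; rfl

@[simp]
theorem reduce_mk (f : Module.End R M) (x : M) :
    reduce I f (Submodule.Quotient.mk x) = Submodule.Quotient.mk (f x) := rfl

theorem reduce_surjective [Module.Projective R M] : Function.Surjective (reduce (M := M) I) := by
  intro g
  obtain ⟨f, hf⟩ := Module.projective_lifting_property (I • ⊤ : Submodule R M).mkQ
    (g ∘ₗ (I • ⊤ : Submodule R M).mkQ) (Submodule.mkQ_surjective _)
  exact ⟨f, Submodule.linearMap_qext _ hf⟩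

theorem range_pow_le_of_mem_ker_reduce {f : Module.End R M} (hf : f ∈ RingHom.ker (reduce I))
    (n : ℕ) : LinearMap.range (f ^ n) ≤ I ^ n • ⊤ := by
  have hrange : LinearMap.range f ≤ I • ⊤ := by
    rintro _ ⟨x, rfl⟩
    simpa using LinearMap.congr_fun hf (Submodule.Quotient.mk x)
  induction n with
  | zero => rw [I.pow_zero, Ideal.one_eq_top, Submodule.top_smul]; exact le_top
  | succ n ih =>
    calc LinearMap.range (f ^ (n + 1)) = (LinearMap.range (f ^ n)).map f := by
          rw [pow_succ', Module.End.mul_eq_comp, LinearMap.range_comp]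
      _ ≤ (I ^ n • ⊤ : Submodule R M).map f := Submodule.map_mono ih
      _ = I ^ n • LinearMap.range f := by rw [Submodule.map_smul'', Submodule.map_top]
      _ ≤ I ^ (n + 1) • ⊤ := by
        rw [I.pow_succ, Submodule.mul_smul]
        exact smul_mono_right _ hrange

theorem isNilpotent_of_mem_ker_reduce {I : Ideal R} (hI : IsNilpotent I)
    {f : Module.End R M} (hf : f ∈ RingHom.ker (reduce I)) : IsNilpotent f := by
  obtain ⟨n, hn⟩ := hI
  refine ⟨n, LinearMap.range_eq_bot.mp (le_bot_iff.mp ?_)⟩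
  simpa [hn] using range_pow_le_of_mem_ker_reduce I hf n

end Module.End

section

variable {R M : Type*} [Ring R] [AddCommGroup M] [Module R M]

theorem IsSemisimpleModule.isSimpleModule_of_isIdempotentElem [IsSemisimpleModule R M]
    [Nontrivial M] (h : ∀ e : Module.End R M, IsIdempotentElem e → e = 0 ∨ e = 1) :
    IsSimpleModule R M where
  eq_bot_or_eq_top N := by
    obtain ⟨N', hN⟩ := exists_isCompl N
    rcases h _ (N.isIdempotentElem_projection hN) with h0 | h1
    · exact .inl (by rw [← N.range_projection hN, h0, LinearMap.range_zero])
    · exact .inr (by rw [← N.range_projection hN, h1, Module.End.one_eq_id, LinearMap.range_id])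

theorem IsIndecomposable.eq_zero_or_eq_one_of_isIdempotentElem (hM : IsIndecomposable R M)
    {e : Module.End R M} (he : IsIdempotentElem e) : e = 0 ∨ e = 1 := by
  rcases hM.2 _ _ (LinearMap.IsIdempotentElem.isCompl he) with h | h
  · exact .inl (LinearMap.range_eq_bot.mp h)
  · refine .inr (sub_eq_zero.mp (LinearMap.range_eq_bot.mp ?_)).symm
    rw [LinearMap.IsIdempotentElem.range_eq_ker_one_sub he.one_sub, sub_sub_cancel, h]

theorem IsIndecomposable.eq_zero_or_eq_one_of_isIdempotentElem_reduce [Module.Projective R M]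
    (hM : IsIndecomposable R M) {I : Ideal R} (hI : IsNilpotent I)
    {e : Module.End R (M ⧸ I • (⊤ : Submodule R M))} (he : IsIdempotentElem e) :
    e = 0 ∨ e = 1 := by
  obtain ⟨e', he', rfl⟩ := exists_isIdempotentElem_eq_of_ker_isNilpotent (Module.End.reduce I)
    (fun _ ↦ Module.End.isNilpotent_of_mem_ker_reduce hI) e
    (Module.End.reduce_surjective I e) he
  rcases hM.eq_zero_or_eq_one_of_isIdempotentElem he' with rfl | rfl
  exacts [.inl (map_zero _), .inr (map_one _)]

theorem IsIndecomposable.exists_span_singleton_eq_top [IsSemiprimaryRing R]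
    [Module.Projective R M] (hM : IsIndecomposable R M) : ∃ x : M, Submodule.span R {x} = ⊤ := by
  have hJ : IsNilpotent (Ring.jacobson R) := IsSemiprimaryRing.isNilpotent
  set N := Ring.jacobson R • (⊤ : Submodule R M)
  have := hM.1
  have : Nontrivial (M ⧸ N) :=
    Submodule.Quotient.nontrivial_iff.mpr (Submodule.smul_top_ne_top hJ)
  have : IsSimpleModule R (M ⧸ N) := IsSemisimpleModule.isSimpleModule_of_isIdempotentElem
    fun _ ↦ hM.eq_zero_or_eq_one_of_isIdempotentElem_reduce hJ
  obtain ⟨q, hq⟩ := exists_ne (0 : M ⧸ N)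
  obtain ⟨x, rfl⟩ := N.mkQ_surjective q
  refine ⟨x, Submodule.eq_top_of_sup_smul_top_eq_top hJ ?_⟩
  rw [sup_comm, ← Submodule.map_mkQ_eq_top, Submodule.map_span, Set.image_singleton]
  exact IsSimpleModule.span_singleton_eq_top R hq

end

/-- Every projective indecomposable module over a finite-dimensional algebra is cyclic. -/
theorem stmt13 {K A P : Type*} [Field K] [Ring A] [Algebra K A] [FiniteDimensional K A]
    [AddCommGroup P] [Module A P] [Module.Projective A P]
    (hP : IsIndecomposable A P) :
    ∃ x : P, Submodule.span A {x} = ⊤ := by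
  have : IsArtinianRing A := isArtinian_of_tower K inferInstance
  exact hP.exists_span_singleton_eq_top
end
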